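/- Let f : ℤⁿ → ℝ ∪ {+∞} be a DDM-convex function, x⁽⁰⁾ ∈ dom f, and for k ≥ 0 let S_k = {x ∈ ℤⁿ : ‖x − x⁽⁰⁾‖_∞ ≤ k}. For each k ≥ 1 and any x⁽ᵏ⁻¹⁾ minimizing f over S_{k−1}, there exists x⁽ᵏ⁾ minimizing f over S_k with ‖x⁽ᵏ⁾ − x⁽ᵏ⁻¹⁾‖_∞ ≤ 1. -/

import Mathlib

open Finset

/-- Directed midpoint `μ(x,y)`: round `(xᵢ+yᵢ)/2` towards `xᵢ`, componentwise:
`μ(x,y)ᵢ = ⌈(xᵢ+yᵢ)/2⌉` if `xᵢ ≥ yᵢ`, and `μ(x,y)ᵢ = ⌊(xᵢ+yᵢ)/2⌋` if `xᵢ < yᵢ`. -/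
def dmu {n : ℕ} (x y : Fin n → ℤ) : Fin n → ℤ := fun i =>
  if y i ≤ x i then ⌈((x i + y i : ℤ) : ℚ) / 2⌉ else ⌊((x i + y i : ℤ) : ℚ) / 2⌋

/-- The ℓ∞-norm of an integer vector, as a natural number. -/
def normInf {n : ℕ} (z : Fin n → ℤ) : ℕ := Finset.univ.sup fun i => (z i).natAbs

/-- A function `f : ℤⁿ → ℝ ∪ {+∞}` is DDM-convex if
`f(x) + f(y) ≥ f(μ(x,y)) + f(μ(y,x))` for all `x, y ∈ ℤⁿ`. -/
def DDMConvexFn {n : ℕ} (f : (Fin n → ℤ) → EReal) : Prop :=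
  ∀ x y : Fin n → ℤ, f (dmu x y) + f (dmu y x) ≤ f x + f y

/-- Scalar version of the directed midpoint. -/
def smu (a b : ℤ) : ℤ :=
  if b ≤ a then ⌈((a + b : ℤ) : ℚ) / 2⌉ else ⌊((a + b : ℤ) : ℚ) / 2⌋

lemma dmu_apply {n : ℕ} (x y : Fin n → ℤ) (i : Fin n) :
    dmu x y i = smu (x i) (y i) := rfl

lemma hceil_le {a m : ℤ} (h : a ≤ 2 * m) : ⌈((a : ℤ) : ℚ) / 2⌉ ≤ m :=
  Int.ceil_le.mpr (by qify at h; linarith)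

lemma hle_ceil {a m : ℤ} (h : 2 * m ≤ a + 1) : m ≤ ⌈((a : ℤ) : ℚ) / 2⌉ := by
  have : (m - 1 : ℤ) < ⌈((a : ℤ) : ℚ) / 2⌉ :=
    Int.lt_ceil.mpr (by qify at h; push_cast; linarith)
  omega

lemma hle_floor {a m : ℤ} (h : 2 * m ≤ a) : m ≤ ⌊((a : ℤ) : ℚ) / 2⌋ :=
  Int.le_floor.mpr (by qify at h; linarith)

lemma hfloor_le {a m : ℤ} (h : a ≤ 2 * m + 1) : ⌊((a : ℤ) : ℚ) / 2⌋ ≤ m := by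
  have : ⌊((a : ℤ) : ℚ) / 2⌋ < (m + 1 : ℤ) :=
    Int.floor_lt.mpr (by qify at h; push_cast; linarith)
  omega

/-- Betweenness bound. -/
lemma smu_between {a b o k : ℤ} (h1 : o - k ≤ a) (h2 : a ≤ o + k)
    (h3 : o - k ≤ b) (h4 : b ≤ o + k) : o - k ≤ smu a b ∧ smu a b ≤ o + k := by
  unfold smu
  split_ifs with h
  · exact ⟨hle_ceil (by omega), hceil_le (by omega)⟩
  · exact ⟨hle_floor (by omega), hfloor_le (by omega)⟩

/-- The midpoint rounded towards the inner point stays in the smaller ball. -/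
lemma smu_inner {p c o k : ℤ} (h1 : o - (k - 1) ≤ p) (h2 : p ≤ o + (k - 1))
    (h3 : o - k ≤ c) (h4 : c ≤ o + k) :
    o - (k - 1) ≤ smu p c ∧ smu p c ≤ o + (k - 1) := by
  unfold smu
  split_ifs with h
  · exact ⟨hle_ceil (by omega), hceil_le (by omega)⟩
  · exact ⟨hle_floor (by omega), hfloor_le (by omega)⟩

/-- The midpoint rounded towards `c` is strictly closer to `p` when they are far apart. -/
lemma smu_step {c p d : ℤ} (h1 : p - d ≤ c) (h2 : c ≤ p + d) (hd : 2 ≤ d) :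
    p - (d - 1) ≤ smu c p ∧ smu c p ≤ p + (d - 1) := by
  unfold smu
  split_ifs with h
  · exact ⟨hle_ceil (by omega), hceil_le (by omega)⟩
  · exact ⟨hle_floor (by omega), hfloor_le (by omega)⟩

lemma normInf_le_iff {n : ℕ} (z : Fin n → ℤ) (m : ℕ) :
    normInf z ≤ m ↔ ∀ i, (z i).natAbs ≤ m := by
  simp [normInf, Finset.sup_le_iff]

/-- Along the 1-neighborhood steepest descent: if `x⁽ᵏ⁻¹⁾` minimizes the
DDM-convex function `f` over `S_{k-1} = {x : ‖x - x⁽⁰⁾‖_∞ ≤ k-1}`, then some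
`x⁽ᵏ⁾` minimizing `f` over `S_k` satisfies `‖x⁽ᵏ⁾ - x⁽ᵏ⁻¹⁾‖_∞ ≤ 1`. -/
theorem ddmConvex_descent_step {n : ℕ} (f : (Fin n → ℤ) → EReal)
    (hbot : ∀ x, f x ≠ ⊥) (hf : DDMConvexFn f)
    (x0 : Fin n → ℤ) (hx0 : f x0 ≠ ⊤) (k : ℕ) (hk : 1 ≤ k)
    (xprev : Fin n → ℤ) (hprevmem : normInf (xprev - x0) ≤ k - 1)
    (hprevmin : ∀ z : Fin n → ℤ, normInf (z - x0) ≤ k - 1 → f xprev ≤ f z) :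
    ∃ xk : Fin n → ℤ, normInf (xk - x0) ≤ k ∧
      (∀ z : Fin n → ℤ, normInf (z - x0) ≤ k → f xk ≤ f z) ∧
      normInf (xk - xprev) ≤ 1 := by
  classical
  -- the finite ball S_k
  set T : Finset (Fin n → ℤ) :=
    Fintype.piFinset (fun i => Finset.Icc (x0 i - k) (x0 i + k)) with hT
  have hmemT : ∀ z : Fin n → ℤ, z ∈ T ↔ normInf (z - x0) ≤ k := by
    intro z
    rw [hT, Fintype.mem_piFinset, normInf_le_iff]
    constructor
    · intro h i
      have := h i
      rw [Finset.mem_Icc] at this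
      simp only [Pi.sub_apply]
      omega
    · intro h i
      have := h i
      simp only [Pi.sub_apply] at this
      rw [Finset.mem_Icc]
      omega
  have hx0T : x0 ∈ T := by
    rw [hmemT]
    simp [normInf_le_iff]
  obtain ⟨y0, hy0T, hy0min⟩ := T.exists_min_image f ⟨x0, hx0T⟩
  set T' : Finset (Fin n → ℤ) := T.filter (fun z => f z ≤ f y0) with hT'
  have hy0T' : y0 ∈ T' := by
    rw [hT', Finset.mem_filter]; exact ⟨hy0T, le_refl _⟩
  obtain ⟨y, hyT', hymin⟩ :=
    T'.exists_min_image (fun z => normInf (z - xprev)) ⟨y0, hy0T'⟩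
  rw [hT', Finset.mem_filter] at hyT'
  obtain ⟨hyT, hfyy0⟩ := hyT'
  -- y minimizes f over S_k
  have hyminT : ∀ z : Fin n → ℤ, normInf (z - x0) ≤ k → f y ≤ f z := by
    intro z hz
    exact le_trans hfyy0 (hy0min z ((hmemT z).mpr hz))
  by_cases hnear : normInf (y - xprev) ≤ 1
  · exact ⟨y, (hmemT y).mp hyT, hyminT, hnear⟩
  -- otherwise, contradiction
  exfalso
  set d : ℕ := normInf (y - xprev) with hd
  have hd2 : 2 ≤ d := by omega
  set u : Fin n → ℤ := dmu y xprev with hu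
  set v : Fin n → ℤ := dmu xprev y with hv
  -- coordinatewise bounds
  have hyb : ∀ i, (y i - x0 i).natAbs ≤ k := by
    have := (hmemT y).mp hyT
    rw [normInf_le_iff] at this
    intro i; have := this i; simpa using this
  have hpb : ∀ i, (xprev i - x0 i).natAbs ≤ k - 1 := by
    rw [normInf_le_iff] at hprevmem
    intro i; have := hprevmem i; simpa using this
  have hyp : ∀ i, (y i - xprev i).natAbs ≤ d := by
    have : normInf (y - xprev) ≤ d := le_refl _
    rw [normInf_le_iff] at this
    intro i; have := this i; simpa using this
  -- v ∈ S_{k-1}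
  have hvmem : normInf (v - x0) ≤ k - 1 := by
    rw [normInf_le_iff]
    intro i
    have h1 := hpb i
    have h2 := hyb i
    have key := smu_inner (p := xprev i) (c := y i) (o := x0 i) (k := (k : ℤ))
      (by omega) (by omega) (by omega) (by omega)
    rw [hv, Pi.sub_apply, dmu_apply]
    omega
  -- u ∈ S_k
  have humem : normInf (u - x0) ≤ k := by
    rw [normInf_le_iff]
    intro i
    have h1 := hpb i
    have h2 := hyb i
    have key := smu_between (a := y i) (b := xprev i) (o := x0 i) (k := (k : ℤ))
      (by omega) (by omega) (by omega) (by omega)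
    rw [hu, Pi.sub_apply, dmu_apply]
    omega
  -- u is strictly closer to xprev
  have hustep : normInf (u - xprev) ≤ d - 1 := by
    rw [normInf_le_iff]
    intro i
    have h1 := hyp i
    have key := smu_step (c := y i) (p := xprev i) (d := (d : ℤ))
      (by omega) (by omega) (by omega)
    rw [hu, Pi.sub_apply, dmu_apply]
    omega
  -- f xprev ≤ f v
  have hfv : f xprev ≤ f v := hprevmin v hvmem
  -- f xprev is finite
  have hprev0 : f xprev ≤ f x0 := by
    apply hprevmin
    simp [normInf_le_iff]
  have hprevtop : f xprev ≠ ⊤ := by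
    intro h
    rw [h] at hprev0
    exact hx0 (top_le_iff.mp hprev0)
  -- DDM inequality
  have hddm : f u + f v ≤ f y + f xprev := hf y xprev
  -- cancel f xprev to get f u ≤ f y
  have hfu : f u ≤ f y := by
    have hchain : f u + f xprev ≤ f y + f xprev :=
      le_trans (add_le_add_right hfv _) hddm
    obtain ⟨a, ha⟩ : ∃ a : ℝ, f xprev = (a : EReal) :=
      ⟨(f xprev).toReal, (EReal.coe_toReal hprevtop (hbot _)).symm⟩
    rw [ha] at hchain
    exact (EReal.addLECancellable_coe a).add_le_add_iff_right.mp hchain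
  -- u belongs to T'
  have huT' : u ∈ T' := by
    rw [hT', Finset.mem_filter]
    exact ⟨(hmemT u).mpr humem, le_trans hfu hfyy0⟩
  have := hymin u huT'
  omega
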